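/- arXiv:math/0101043 — 3 statements merged into one kernel-verified Lean document; each statement's English description precedes it below -/
import Mathlib

section
/- With Γ, φ and the Novikov ring Λ_φ as above (φ injective), Λ_φ with pointwise addition and convolution product is a field. -/
/-!
Pulling the order of `ℝ` back along the injective `φ` makes `Γ` a linearly ordered group in which
every Novikov support is well-ordered, so `Λ_φ` is a subring of the Hahn series field `ℂ⟦Γ⟧`, with
the same addition and convolution. It is closed under inversion: if `x` has leading term `c t⁻ᵃ`,
then `x⁻¹ = c⁻¹ tᵃ ∑ yⁿ`, where `y = 1 - c⁻¹ tᵃ x` has positive order. If `φ ≥ ε > 0` on the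
support of `y`, then `φ ≥ n ε` on the support of `yⁿ`, so below any level `R` only the finitely
many Novikov series `yⁿ` with `n < R / ε` contribute.
-/
/-- The Novikov condition. -/
def NovikovCond {Γ : Type*} [AddCommGroup Γ] (φ : Γ →+ ℝ) (f : Γ → ℂ) : Prop :=
  ∀ R : ℝ, {γ : Γ | f γ ≠ 0 ∧ φ γ ≤ R}.Finite

open HahnSeries Function

namespace HahnSeries

variable {Γ : Type*} [AddCommGroup Γ] [LinearOrder Γ]

theorem exists_pos_le_map_of_orderTop_pos {φ : Γ →+ ℝ} (hφ : StrictMono φ) {R : Type*} [Zero R]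
    {y : HahnSeries Γ R} (hy : 0 < y.orderTop) :
    ∃ ε > 0, ∀ γ, y.coeff γ ≠ 0 → ε ≤ φ γ := by
  rcases eq_or_ne y 0 with rfl | hy0
  · exact ⟨1, one_pos, fun γ h => absurd rfl h⟩
  · refine ⟨φ y.order, ?_, fun γ h => hφ.monotone (order_le_of_coeff_ne_zero h)⟩
    simpa using hφ ((zero_lt_orderTop_iff hy0).1 hy)

variable [IsOrderedAddMonoid Γ]

theorem mul_le_map_of_coeff_pow_ne_zero {φ : Γ →+ ℝ} {R : Type*} [Semiring R]
    {y : HahnSeries Γ R} {ε : ℝ} (hε : ∀ γ, y.coeff γ ≠ 0 → ε ≤ φ γ) :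
    ∀ (n : ℕ) {γ : Γ}, (y ^ n).coeff γ ≠ 0 → n * ε ≤ φ γ
  | 0, γ, hγ => by
    rw [pow_zero, ← single_zero_one] at hγ
    obtain rfl := eq_of_mem_support_single hγ
    simp
  | n + 1, _, hγ => by
    obtain ⟨α, hα, β, hβ, rfl⟩ := support_mul_subset (pow_succ y n ▸ hγ)
    have ih := mul_le_map_of_coeff_pow_ne_zero hε n hα
    have hβε := hε β hβ
    push_cast
    rw [map_add]
    linarith

theorem coeff_mul_eq_finsum {R : Type*} [NonUnitalNonAssocSemiring R] (x y : HahnSeries Γ R)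
    (a : Γ) : (x * y).coeff a = ∑ᶠ b, x.coeff b * y.coeff (a - b) := by
  have hsupp : (Function.support fun b => x.coeff b * y.coeff (a - b)) ⊆
      (Finset.antidiagonal x.isPWO_support y.isPWO_support a).image Prod.fst := by
    intro b hb
    refine Finset.mem_image.2 ⟨(b, a - b), Finset.mem_antidiagonal.2 ⟨left_ne_zero_of_mul hb,
      right_ne_zero_of_mul hb, add_sub_cancel _ _⟩, rfl⟩
  rw [finsum_eq_sum_of_support_subset _ hsupp, coeff_mul, Finset.sum_image]
  · refine Finset.sum_congr rfl fun ij hij => ?_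
    rw [← (Finset.mem_antidiagonal.1 hij).2.2, add_sub_cancel_left]
  · intro ij hij kl hkl h
    have := (Finset.mem_antidiagonal.1 hij).2.2.trans (Finset.mem_antidiagonal.1 hkl).2.2.symm
    exact Prod.ext h (add_left_cancel (h ▸ this))

end HahnSeries

namespace NovikovCond

variable {Γ : Type*} [AddCommGroup Γ] {φ : Γ →+ ℝ} {f g : Γ → ℂ}

theorem zero : NovikovCond φ 0 := fun _ => Set.finite_empty.subset fun _ h => h.1 rfl

theorem mono (hf : NovikovCond φ f) (h : support g ⊆ support f) : NovikovCond φ g :=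
  fun R => (hf R).subset fun _ hγ => ⟨h hγ.1, hγ.2⟩

theorem neg (hf : NovikovCond φ f) : NovikovCond φ (-f) :=
  hf.mono (support_neg f).subset

theorem add (hf : NovikovCond φ f) (hg : NovikovCond φ g) : NovikovCond φ (f + g) := fun R =>
  ((hf R).union (hg R)).subset fun _ ⟨hγ, hR⟩ =>
    (support_add f g hγ).imp (fun h => ⟨h, hR⟩) (fun h => ⟨h, hR⟩)

theorem isPWO_support [LinearOrder Γ] (hφ : Monotone φ) (hf : NovikovCond φ f) :
    (support f).IsPWO := by
  refine Set.IsWF.isPWO ?_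
  rw [Set.isWF_iff_no_descending_seq]
  intro s hs hmem
  have hbelow : ∀ n, s n ∈ {γ | f γ ≠ 0 ∧ φ γ ≤ φ (s 0)} :=
    fun n => ⟨hmem n, hφ (hs.antitone n.zero_le)⟩
  exact Set.infinite_of_injective_forall_mem hs.injective hbelow (hf (φ (s 0)))

theorem coeff_single [PartialOrder Γ] (a : Γ) (c : ℂ) : NovikovCond φ (single a c).coeff :=
  fun _ => (Set.finite_singleton a).subset fun _ hγ => support_single_subset hγ.1

theorem coeff_one [PartialOrder Γ] : NovikovCond φ (1 : HahnSeries Γ ℂ).coeff :=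
  coeff_single 0 1

section Ordered

variable [LinearOrder Γ] [IsOrderedAddMonoid Γ]

theorem coeff_mul (hφ : Monotone φ) {x y : HahnSeries Γ ℂ} (hx : NovikovCond φ x.coeff)
    (hy : NovikovCond φ y.coeff) : NovikovCond φ (x * y).coeff := by
  intro R
  refine (((hx (R - φ y.order)).prod (hy (R - φ x.order))).image fun p => p.1 + p.2).subset ?_
  rintro γ ⟨hγ, hR⟩
  obtain ⟨α, hα, β, hβ, rfl⟩ := support_mul_subset hγ
  have hxα : φ x.order ≤ φ α := hφ (order_le_of_coeff_ne_zero hα)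
  have hyβ : φ y.order ≤ φ β := hφ (order_le_of_coeff_ne_zero hβ)
  rw [map_add] at hR
  exact ⟨(α, β), ⟨⟨hα, by linarith⟩, hβ, by linarith⟩, rfl⟩

theorem coeff_pow (hφ : Monotone φ) {y : HahnSeries Γ ℂ} (hy : NovikovCond φ y.coeff) :
    ∀ n : ℕ, NovikovCond φ (y ^ n).coeff
  | 0 => by simpa using coeff_one
  | n + 1 => by simpa only [pow_succ] using (coeff_pow hφ hy n).coeff_mul hφ hy

theorem coeff_hsum_powers (hφ : StrictMono φ) {y : HahnSeries Γ ℂ}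
    (hy : NovikovCond φ y.coeff) (hpos : 0 < y.orderTop) :
    NovikovCond φ (SummableFamily.powers y).hsum.coeff := by
  obtain ⟨ε, hε, hεy⟩ := exists_pos_le_map_of_orderTop_pos hφ hpos
  intro R
  obtain ⟨N, hN⟩ := exists_nat_gt (R / ε)
  refine ((Finset.range N).finite_toSet.biUnion fun n _ => hy.coeff_pow hφ.monotone n R).subset ?_
  rintro γ ⟨hγ, hR⟩
  obtain ⟨n, hn⟩ := Set.mem_iUnion.1 (SummableFamily.support_hsum_subset hγ)
  rw [SummableFamily.powers_of_orderTop_pos hpos] at hn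
  have hnR : n * ε ≤ R := (mul_le_map_of_coeff_pow_ne_zero hεy n hn).trans hR
  have hnN : n < N := by exact_mod_cast ((le_div_iff₀ hε).2 hnR).trans_lt hN
  exact Set.mem_biUnion (Finset.mem_coe.2 (Finset.mem_range.2 hnN)) ⟨hn, hR⟩

theorem coeff_inv (hφ : StrictMono φ) {x : HahnSeries Γ ℂ} (hx : NovikovCond φ x.coeff) :
    NovikovCond φ x⁻¹.coeff := by
  rcases eq_or_ne x 0 with rfl | hx0
  · rw [inv_zero]; exact zero
  have hr := inv_mul_cancel₀ (leadingCoeff_ne_zero.mpr hx0)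
  have hy : NovikovCond φ (1 - single (-x.order) x.leadingCoeff⁻¹ * x).coeff := by
    rw [sub_eq_add_neg]
    exact coeff_one.add ((coeff_single _ _).coeff_mul hφ.monotone hx).neg
  rw [inv_def]
  exact (coeff_single _ _).coeff_mul hφ.monotone
    (coeff_hsum_powers hφ hy (unit_aux x hr _ (neg_add_cancel _)))

end Ordered

end NovikovCond

section Subfield

variable {Γ : Type*} [AddCommGroup Γ] [LinearOrder Γ] [IsOrderedAddMonoid Γ] {φ : Γ →+ ℝ}

def novikovSubfield (hφ : StrictMono φ) : Subfield (HahnSeries Γ ℂ) where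
  carrier := {x | NovikovCond φ x.coeff}
  zero_mem' := NovikovCond.zero
  one_mem' := NovikovCond.coeff_one
  add_mem' := NovikovCond.add
  neg_mem' := NovikovCond.neg
  mul_mem' := NovikovCond.coeff_mul hφ.monotone
  inv_mem' _ := NovikovCond.coeff_inv hφ

def novikovEquivSubfield (hφ : StrictMono φ) :
    {f : Γ → ℂ // NovikovCond φ f} ≃ novikovSubfield hφ where
  toFun f := ⟨⟨f.1, f.2.isPWO_support hφ.monotone⟩, f.2⟩
  invFun x := ⟨x.1.coeff, x.2⟩

end Subfield

theorem stmt_1_general {Γ : Type*} [AddCommGroup Γ]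
    (φ : Γ →+ ℝ) (hφ : Function.Injective φ) :
    ∃ F : Field {f : Γ → ℂ // NovikovCond φ f},
      (∀ x y : {f : Γ → ℂ // NovikovCond φ f},
        (F.add x y).val = fun γ => x.val γ + y.val γ) ∧
      (∀ x y : {f : Γ → ℂ // NovikovCond φ f},
        (F.mul x y).val = fun γ => ∑ᶠ γ' : Γ, x.val γ' * y.val (γ - γ')) := by
  let _ : LinearOrder Γ := LinearOrder.lift' φ hφ
  have hmono : StrictMono φ := fun _ _ h => h
  have _ : IsOrderedAddMonoid Γ := hmono.isOrderedAddMonoid φ (map_add φ)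
  exact ⟨(novikovEquivSubfield hmono).field, fun _ _ => rfl,
    fun x y => funext fun γ => coeff_mul_eq_finsum _ _ γ⟩

theorem stmt_1 {Γ : Type*} [AddCommGroup Γ] (r : ℕ) (b : Module.Basis (Fin r) ℤ Γ)
    (φ : Γ →+ ℝ) (hφ : Function.Injective φ) :
    ∃ F : Field {f : Γ → ℂ // NovikovCond φ f},
      (∀ x y : {f : Γ → ℂ // NovikovCond φ f},
        (F.add x y).val = fun γ => x.val γ + y.val γ) ∧
      (∀ x y : {f : Γ → ℂ // NovikovCond φ f},
        (F.mul x y).val = fun γ => ∑ᶠ γ' : Γ, x.val γ' * y.val (γ - γ')) :=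
  stmt_1_general φ hφ
end

section
/- Let H be a Hilbert space and A : H → H a densely defined self-adjoint positive operator. Let 0 < a < b < ∞ and suppose H = H₁ ⊕ H₂ is a decomposition into closed subspaces with H₁ ∩ H₂ = 0 such that ⟨Ax₁, x₁⟩ ≤ a‖x₁‖² for all x₁ ∈ H₁ (in the domain of A) and ⟨Ax₂, x₂⟩ ≥ b‖x₂‖² for all x₂ ∈ H₂ (in the domain of A). Then the spectrum of A does not intersect the open interval (a, b). -/
/-!
Write `T = μ - A`. For `x = u + v` with `u ∈ H₁`, `v ∈ H₂`, self-adjointness makes the cross terms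
cancel in `re ⟪T x, u - v⟫ = re ⟪T u, u⟫ - re ⟪T v, v⟫`, and the two form bounds make this at least
`c (‖u‖² + ‖v‖²) ≥ (c / 2) ‖x‖²` with `c = min (μ - a) (b - μ)`. Since the splitting is topological,
`x ↦ u - v` is bounded, so Cauchy–Schwarz shows `T` is bounded below. A self-adjoint operator that
is bounded below is invertible, because the orthogonal complement of its range is its kernel.
-/

open scoped InnerProductSpace

section

open RCLike

variable {𝕜 E : Type*} [RCLike 𝕜] [NormedAddCommGroup E] [InnerProductSpace 𝕜 E]

theorem ContinuousLinearMap.IsStarNormal.isUnit_of_antilipschitzWith [CompleteSpace E]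
    {T : E →L[𝕜] E} (hT : IsStarNormal T) {K : NNReal} (hK : AntilipschitzWith K T) :
    IsUnit T := by
  rw [isUnit_iff_bijective, bijective_iff_dense_range_and_antilipschitz]
  refine ⟨?_, K, hK⟩
  rw [Submodule.topologicalClosure_eq_top_iff, ContinuousLinearMap.IsStarNormal.orthogonal_range hT,
    LinearMap.ker_eq_bot]
  exact hK.injective

theorem ContinuousLinearMap.exists_antilipschitzWith_of_le_re_inner (T R : E →L[𝕜] E) {c : ℝ}
    (hc : 0 < c) (h : ∀ x, c * ‖x‖ ^ 2 ≤ re ⟪T x, R x⟫_𝕜) : ∃ K, AntilipschitzWith K T := by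
  refine ⟨⟨‖R‖ / c, by positivity⟩, T.antilipschitz_of_bound fun x ↦ ?_⟩
  rcases eq_or_ne x 0 with rfl | hx
  · simp
  have hxpos : 0 < ‖x‖ := norm_pos_iff.mpr hx
  have key : c * ‖x‖ * ‖x‖ ≤ ‖R‖ * ‖T x‖ * ‖x‖ :=
    calc c * ‖x‖ * ‖x‖ = c * ‖x‖ ^ 2 := by ring
      _ ≤ re ⟪T x, R x⟫_𝕜 := h x
      _ ≤ ‖T x‖ * ‖R x‖ := (re_le_norm _).trans (norm_inner_le_norm _ _)
      _ ≤ ‖T x‖ * (‖R‖ * ‖x‖) := by gcongr; exact R.le_opNorm x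
      _ = ‖R‖ * ‖T x‖ * ‖x‖ := by ring
  change ‖x‖ ≤ ‖R‖ / c * ‖T x‖
  rw [div_mul_eq_mul_div, le_div_iff₀ hc, mul_comm]
  exact le_of_mul_le_mul_right key hxpos

theorem LinearMap.IsSymmetric.re_inner_map_add_sub {T : E →ₗ[𝕜] E} (hT : T.IsSymmetric)
    (u v : E) : re ⟪T (u + v), u - v⟫_𝕜 = re ⟪T u, u⟫_𝕜 - re ⟪T v, v⟫_𝕜 := by
  have hcross : re ⟪T v, u⟫_𝕜 = re ⟪T u, v⟫_𝕜 := by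
    rw [hT v u, ← inner_conj_symm, conj_re]
  simp only [map_add, inner_add_left, inner_sub_right, map_sub]
  linarith

theorem IsSelfAdjoint.isUnit_of_isTopCompl [CompleteSpace E] {T : E →L[𝕜] E}
    (hT : IsSelfAdjoint T) {p q : Submodule 𝕜 E} (hpq : p.IsTopCompl q) {c : ℝ} (hc : 0 < c)
    (hp : ∀ x ∈ p, c * ‖x‖ ^ 2 ≤ re ⟪T x, x⟫_𝕜)
    (hq : ∀ x ∈ q, c * ‖x‖ ^ 2 ≤ -re ⟪T x, x⟫_𝕜) : IsUnit T := by
  set P := p.projectionL q hpq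
  set Q := q.projectionL p hpq.symm
  have hPQ (x : E) : P x + Q x = x := Submodule.projectionL_add_projectionL_eq_self hpq x
  -- `P - Q` sends `u + v` to `u - v`, and the parallelogram law gives `‖u + v‖² ≤ 2 (‖u‖² + ‖v‖²)`.
  obtain ⟨K, hK⟩ := T.exists_antilipschitzWith_of_le_re_inner (P - Q) (half_pos hc) fun x ↦ by
    have hx := parallelogram_law_with_norm 𝕜 (P x) (Q x)
    have hPx := hp (P x) (Submodule.projectionL_apply_mem hpq x)
    have hQx := hq (Q x) (Submodule.projectionL_apply_mem hpq.symm x)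
    have hsplit := hT.isSymmetric.re_inner_map_add_sub (P x) (Q x)
    simp only [ContinuousLinearMap.coe_coe, hPQ] at hsplit
    rw [hPQ] at hx
    rw [sub_apply]
    nlinarith [sq_nonneg ‖P x - Q x‖]
  exact ContinuousLinearMap.IsStarNormal.isUnit_of_antilipschitzWith hT.isStarNormal hK

theorem re_inner_algebraMap_sub_apply_self (A : E →L[𝕜] E) (r : 𝕜) (x : E) :
    re ⟪(algebraMap 𝕜 (E →L[𝕜] E) r - A) x, x⟫_𝕜 = re r * ‖x‖ ^ 2 - re ⟪A x, x⟫_𝕜 := by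
  rw [Algebra.algebraMap_eq_smul_one]
  simp [inner_sub_left, inner_smul_left, inner_self_eq_norm_sq_to_K]

end

theorem stmt_5_general {H : Type*} [NormedAddCommGroup H] [InnerProductSpace ℂ H]
    [CompleteSpace H]
    (A : H →L[ℂ] H) (hA : IsSelfAdjoint A)
    (a b : ℝ)
    (H₁ H₂ : Submodule ℂ H) (h1c : IsClosed (H₁ : Set H))
    (h2c : IsClosed (H₂ : Set H))
    (hdisj : H₁ ⊓ H₂ = ⊥) (hsum : H₁ ⊔ H₂ = ⊤)
    (hb1 : ∀ x ∈ H₁, (⟪A x, x⟫_ℂ).re ≤ a * ‖x‖ ^ 2)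
    (hb2 : ∀ x ∈ H₂, b * ‖x‖ ^ 2 ≤ (⟪A x, x⟫_ℂ).re) :
    ∀ μ : ℝ, μ ∈ Set.Ioo a b → (μ : ℂ) ∉ spectrum ℂ A := by
  rintro μ ⟨haμ, hμb⟩
  rw [spectrum.notMem_iff]
  have hT : IsSelfAdjoint (algebraMap ℂ (H →L[ℂ] H) μ - A) :=
    (IsSelfAdjoint.algebraMap _ (Complex.conj_ofReal μ)).sub hA
  have hcompl : H₁.IsTopCompl H₂ :=
    Submodule.IsCompl.isTopCompl_of_isClosed
      ⟨disjoint_iff.mpr hdisj, codisjoint_iff.mpr hsum⟩ h1c h2c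
  have hquad (x : H) :
      RCLike.re ⟪(algebraMap ℂ (H →L[ℂ] H) μ - A) x, x⟫_ℂ = μ * ‖x‖ ^ 2 - (⟪A x, x⟫_ℂ).re := by
    rw [re_inner_algebraMap_sub_apply_self]
    simp only [RCLike.re_to_complex, Complex.ofReal_re]
  refine hT.isUnit_of_isTopCompl hcompl (c := min (μ - a) (b - μ))
    (lt_min (sub_pos.mpr haμ) (sub_pos.mpr hμb)) (fun x hx ↦ ?_) (fun x hx ↦ ?_) <;>
    rw [hquad]
  · nlinarith [hb1 x hx, min_le_left (μ - a) (b - μ), sq_nonneg ‖x‖]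
  · nlinarith [hb2 x hx, min_le_right (μ - a) (b - μ), sq_nonneg ‖x‖]

theorem stmt_5 {H : Type*} [NormedAddCommGroup H] [InnerProductSpace ℂ H]
    [CompleteSpace H]
    (A : H →L[ℂ] H) (hA : IsSelfAdjoint A)
    (hpos : ∀ x : H, 0 ≤ (⟪A x, x⟫_ℂ).re)
    (a b : ℝ) (ha : 0 < a) (hab : a < b)
    (H₁ H₂ : Submodule ℂ H) (h1c : IsClosed (H₁ : Set H))
    (h2c : IsClosed (H₂ : Set H))
    (hdisj : H₁ ⊓ H₂ = ⊥) (hsum : H₁ ⊔ H₂ = ⊤)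
    (hb1 : ∀ x ∈ H₁, (⟪A x, x⟫_ℂ).re ≤ a * ‖x‖ ^ 2)
    (hb2 : ∀ x ∈ H₂, b * ‖x‖ ^ 2 ≤ (⟪A x, x⟫_ℂ).re) :
    ∀ μ : ℝ, μ ∈ Set.Ioo a b → (μ : ℂ) ∉ spectrum ℂ A :=
  stmt_5_general A hA a b H₁ H₂ h1c h2c hdisj hsum hb1 hb2
end

section
/- Let (H, ⟨·,·⟩) be a Hilbert space, Q : H → H an orthogonal projection, and J : ℝ^m → H a linear isometry such that ‖(QJ - J)f‖ ≤ ε‖f‖ for all f, with ε < 1. Then (QJ)* QJ is invertible and R := QJ((QJ)*QJ)^{-1/2} : ℝ^m → H is a well-defined linear isometry onto an m-dimensional subspace of the range of Q, satisfying ‖R - J‖ ≤ Cε for a universal constant C. -/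
/-!
Since `Q` is an orthogonal projection and `J` an isometry, `T := (QJ)*QJ = J*QJ`, so
`1 - T = J*(J - QJ)` and `‖1 - T‖ ≤ ε`. If `S ≥ 0` is the square root of `T` (obtained from the
functional calculus of matrices), then `1 - T = (1 + S)(1 - S)` and `‖(1 + S)y‖ ≥ ‖y‖`, so
`‖1 - S‖ ≤ ε < 1`; hence `S` and `T` are invertible. `R := QJ S⁻¹` satisfies
`R*R = (S S⁻¹)*(S S⁻¹) = 1`, and `R - J = R(1 - S) + (QJ - J)` gives `‖R - J‖ ≤ 2ε`.
-/

open ContinuousLinearMap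
open scoped MatrixOrder ComplexOrder InnerProduct

section Matrix

variable {𝕜 n : Type*} [RCLike 𝕜] [Fintype n] [DecidableEq n]

lemma Matrix.isPositive_toEuclideanCLM_iff {A : Matrix n n 𝕜} :
    (Matrix.toEuclideanCLM (n := n) (𝕜 := 𝕜) A).IsPositive ↔ A.PosSemidef :=
  Matrix.isPositive_toEuclideanLin_iff

lemma ContinuousLinearMap.IsPositive.exists_isPositive_mul_self_eq
    {T : EuclideanSpace 𝕜 n →L[𝕜] EuclideanSpace 𝕜 n} (hT : T.IsPositive) :
    ∃ S : EuclideanSpace 𝕜 n →L[𝕜] EuclideanSpace 𝕜 n, S.IsPositive ∧ S * S = T := by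
  let e := Matrix.toEuclideanCLM (n := n) (𝕜 := 𝕜)
  have hM : (e.symm T).PosSemidef := by
    rwa [← Matrix.isPositive_toEuclideanCLM_iff, StarAlgEquiv.apply_symm_apply]
  refine ⟨e (CFC.sqrt (e.symm T)), ?_, ?_⟩
  · exact Matrix.isPositive_toEuclideanCLM_iff.mpr
      (Matrix.nonneg_iff_posSemidef.mp (CFC.sqrt_nonneg _))
  · rw [← map_mul, CFC.sqrt_mul_sqrt_self _ hM.nonneg, StarAlgEquiv.apply_symm_apply]

end Matrix

section Positive

variable {𝕜 E : Type*} [RCLike 𝕜] [NormedAddCommGroup E] [InnerProductSpace 𝕜 E]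

lemma ContinuousLinearMap.IsPositive.norm_le_norm_add_apply {S : E →L[𝕜] E} (hS : S.IsPositive)
    (x : E) : ‖x‖ ≤ ‖x + S x‖ := by
  rcases (norm_nonneg x).eq_or_lt with hx | hx
  · rw [← hx]; exact norm_nonneg _
  refine le_of_mul_le_mul_right ?_ hx
  calc ‖x‖ * ‖x‖ = RCLike.re (inner 𝕜 x x) := (inner_self_eq_norm_mul_norm x).symm
    _ ≤ RCLike.re (inner 𝕜 x x) + RCLike.re (inner 𝕜 (S x) x) :=
        le_add_of_nonneg_right (hS.re_inner_nonneg_left x)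
    _ = RCLike.re (inner 𝕜 (x + S x) x) := by rw [inner_add_left, map_add]
    _ ≤ ‖x + S x‖ * ‖x‖ := re_inner_le_norm _ _

lemma ContinuousLinearMap.IsPositive.norm_one_sub_le {S : E →L[𝕜] E} (hS : S.IsPositive) :
    ‖1 - S‖ ≤ ‖1 - S * S‖ := by
  refine opNorm_le_bound _ (norm_nonneg _) fun x => ?_
  have hfactor : 1 - S * S = (1 - S) + S * (1 - S) := by noncomm_ring
  calc ‖(1 - S) x‖ ≤ ‖(1 - S) x + S ((1 - S) x)‖ := hS.norm_le_norm_add_apply _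
    _ = ‖(1 - S * S) x‖ := by rw [hfactor, add_apply, mul_apply_eq_comp]
    _ ≤ ‖1 - S * S‖ * ‖x‖ := le_opNorm _ _

end Positive

section Adjoint

variable {𝕜 E F : Type*} [RCLike 𝕜] [NormedAddCommGroup E] [InnerProductSpace 𝕜 E]
  [CompleteSpace E] [NormedAddCommGroup F] [InnerProductSpace 𝕜 F] [CompleteSpace F]

lemma norm_one_sub_adjoint_comp_self_le {Q : F →L[𝕜] F} (hQ : IsStarProjection Q)
    (J : E →ₗᵢ[𝕜] F) :
    ‖1 - (Q ∘L J.toContinuousLinearMap)† ∘L (Q ∘L J.toContinuousLinearMap)‖ ≤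
      ‖Q ∘L J.toContinuousLinearMap - J.toContinuousLinearMap‖ := by
  set J' := J.toContinuousLinearMap
  have hQQ : Q† ∘L Q = Q := by
    rw [← star_eq_adjoint, hQ.isSelfAdjoint.star_eq]; exact hQ.isIdempotentElem
  have hfactor : 1 - (Q ∘L J')† ∘L (Q ∘L J') = J'† ∘L (J' - Q ∘L J') := by
    rw [adjoint_comp, comp_sub, ← J.adjoint_comp_self, comp_assoc, ← comp_assoc (Q†) Q, hQQ]
  calc _ = ‖J'† ∘L (J' - Q ∘L J')‖ := by rw [hfactor]
    _ ≤ ‖J'†‖ * ‖J' - Q ∘L J'‖ := opNorm_comp_le _ _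
    _ ≤ 1 * ‖Q ∘L J' - J'‖ := by
      rw [LinearIsometryEquiv.norm_map, norm_sub_rev]
      gcongr
      exact J.norm_toContinuousLinearMap_le
    _ = _ := one_mul _

lemma IsSelfAdjoint.norm_comp_apply_eq_of_mul_self_eq {A : E →L[𝕜] F} {S R : E →L[𝕜] E}
    (hS : IsSelfAdjoint S) (hSS : S * S = A† ∘L A) (hSR : S * R = 1) (x : E) :
    ‖(A ∘L R) x‖ = ‖x‖ := by
  refine ((A ∘L R).norm_map_iff_adjoint_comp_self).mpr ?_ x
  have hS' : S† = S := by rw [← star_eq_adjoint, hS.star_eq]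
  calc (A ∘L R)† ∘L (A ∘L R) = R† ∘L (A† ∘L A) ∘L R := by
        rw [adjoint_comp, comp_assoc, ← comp_assoc (A†) A R]
    _ = (S * R)† ∘L (S * R) := by
        rw [← hSS, mul_def, mul_def, adjoint_comp, hS', comp_assoc, comp_assoc]
    _ = 1 := by rw [hSR, ← star_eq_adjoint, star_one, one_def, id_comp]

end Adjoint

theorem stmt_19 :
    ∃ C : ℝ, 0 < C ∧
      ∀ (m : ℕ) (H : Type) [NormedAddCommGroup H] [InnerProductSpace ℝ H]
        [CompleteSpace H]
        (Q : H →L[ℝ] H), IsIdempotentElem Q → IsSelfAdjoint Q →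
        ∀ (J : EuclideanSpace ℝ (Fin m) →ₗᵢ[ℝ] H) (ε : ℝ), 0 ≤ ε → ε < 1 →
        (∀ f : EuclideanSpace ℝ (Fin m), ‖Q (J f) - J f‖ ≤ ε * ‖f‖) →
        IsUnit ((ContinuousLinearMap.adjoint
            (Q.comp J.toContinuousLinearMap)).comp
            (Q.comp J.toContinuousLinearMap)) ∧
        ∃ S : EuclideanSpace ℝ (Fin m) →L[ℝ] EuclideanSpace ℝ (Fin m),
          IsSelfAdjoint S ∧ (∀ x, (0 : ℝ) ≤ inner ℝ (S x) x) ∧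
          S.comp S = (ContinuousLinearMap.adjoint
            (Q.comp J.toContinuousLinearMap)).comp
            (Q.comp J.toContinuousLinearMap) ∧
          ∃ Sinv : EuclideanSpace ℝ (Fin m) →L[ℝ] EuclideanSpace ℝ (Fin m),
            S.comp Sinv = ContinuousLinearMap.id ℝ _ ∧
            Sinv.comp S = ContinuousLinearMap.id ℝ _ ∧
            (∀ x, ‖(Q.comp J.toContinuousLinearMap).comp Sinv x‖ = ‖x‖) ∧
            (∀ x, ((Q.comp J.toContinuousLinearMap).comp Sinv) x ∈
              LinearMap.range (Q : H →ₗ[ℝ] H)) ∧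
            ‖(Q.comp J.toContinuousLinearMap).comp Sinv
              - J.toContinuousLinearMap‖ ≤ C * ε := by
  refine ⟨2, two_pos, fun m H _ _ _ Q hQidem hQsa J ε hε0 hε1 hQJ => ?_⟩
  set A := Q ∘L J.toContinuousLinearMap
  have hAJ : ‖A - J.toContinuousLinearMap‖ ≤ ε := opNorm_le_bound _ hε0 hQJ
  obtain ⟨S, hSpos, hSS⟩ := (isPositive_adjoint_comp_self A).exists_isPositive_mul_self_eq
  have hS1 : ‖1 - S‖ ≤ ε := calc
    ‖1 - S‖ ≤ ‖1 - A† ∘L A‖ := hSS ▸ hSpos.norm_one_sub_le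
    _ ≤ ε := (norm_one_sub_adjoint_comp_self_le ⟨hQidem, hQsa⟩ J).trans hAJ
  have hS : IsUnit S := by simpa using isUnit_one_sub_of_norm_lt_one (hS1.trans_lt hε1)
  set Sinv : EuclideanSpace ℝ (Fin m) →L[ℝ] EuclideanSpace ℝ (Fin m) := ↑hS.unit⁻¹
  have hR : ∀ x, ‖(A ∘L Sinv) x‖ = ‖x‖ :=
    hSpos.isSelfAdjoint.norm_comp_apply_eq_of_mul_self_eq hSS hS.mul_val_inv
  refine ⟨hSS ▸ hS.mul hS, S, hSpos.isSelfAdjoint, hSpos.inner_nonneg_left, hSS, Sinv,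
    hS.mul_val_inv, hS.val_inv_mul, hR, fun x => ⟨_, rfl⟩, ?_⟩
  have hRJ : A ∘L Sinv - J.toContinuousLinearMap =
      (A ∘L Sinv) ∘L (1 - S) + (A - J.toContinuousLinearMap) := by
    rw [comp_sub, one_def, comp_id, comp_assoc A Sinv S, ← mul_def, hS.val_inv_mul, one_def,
      comp_id]
    abel
  calc ‖A ∘L Sinv - J.toContinuousLinearMap‖
      ≤ ‖A ∘L Sinv‖ * ‖1 - S‖ + ‖A - J.toContinuousLinearMap‖ :=
        hRJ ▸ norm_add_le_of_le (opNorm_comp_le _ _) le_rfl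
    _ ≤ 1 * ε + ε := by
        gcongr
        exact opNorm_le_bound _ zero_le_one fun x => by rw [hR, one_mul]
    _ = 2 * ε := by ring
end
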